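/- arXiv:0710.0162 — 5 statements merged into one kernel-verified Lean document; each statement's English description precedes it below -/
import Mathlib

section
/- Let F(x,y) = (x²y² + 16xy − 4x²y − 4xy²)/(16 − xy) on the open square 0 < x < 4, 0 < y < 4. Then the maximum of F on this region is attained at x = y = 2(√5 − 1). -/
open Real

noncomputable def F (x y : ℝ) : ℝ :=
  (x^2*y^2 + 16*x*y - 4*x^2*y - 4*x*y^2) / (16 - x*y)

theorem max_of_F (x y : ℝ) (hx0 : 0 < x) (hx4 : x < 4) (hy0 : 0 < y) (hy4 : y < 4) :
    F x y ≤ F (2*(Real.sqrt 5 - 1)) (2*(Real.sqrt 5 - 1)) := by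
  have h5 : Real.sqrt 5 * Real.sqrt 5 = 5 := Real.mul_self_sqrt (by norm_num)
  have hs2 : Real.sqrt 5 > 2 := by nlinarith [Real.sqrt_nonneg 5]
  have hs3 : Real.sqrt 5 < 3 := by nlinarith [Real.sqrt_nonneg 5]
  have hval : F (2*(Real.sqrt 5 - 1)) (2*(Real.sqrt 5 - 1)) = 40*Real.sqrt 5 - 88 := by
    unfold F
    have hd : 16 - (2*(Real.sqrt 5 - 1))*(2*(Real.sqrt 5 - 1)) ≠ 0 := by nlinarith
    rw [div_eq_iff hd]
    nlinarith [h5, hs2]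
  rw [hval]
  have hd : 0 < 16 - x*y := by nlinarith
  rw [F, div_le_iff₀ hd]
  set s := Real.sqrt 5 with hs
  have h1 : (x - 2*(s-1))^2 * ((4 - y) * (y + 4*s - 8)) ≥ 0 := by
    apply mul_nonneg (sq_nonneg _)
    apply mul_nonneg (by linarith) (by nlinarith)
  have h2 : (y - 2*(s-1))^2 * ((4 - x) * (x + 4*s - 8)) ≥ 0 := by
    apply mul_nonneg (sq_nonneg _)
    apply mul_nonneg (by linarith) (by nlinarith)
  have h3 : (28 - 12*s) * (x - y)^2 ≥ 0 := by
    apply mul_nonneg (by nlinarith) (sq_nonneg _)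
  nlinarith [h1, h2, h3, h5]
end

section
/- For real numbers q₁₃, q₁₄, q₂₄, q₂₅, q₃₅ in [0,4] satisfying the cyclic relations q₁₄=4−q₁₃q₂₄/4, q₂₄=4−q₁₄q₂₅/4, q₂₅=4−q₂₄q₃₅/4, q₃₅=4−q₂₅q₁₃/4, q₁₃=4−q₃₅q₁₄/4, the product q₁₃q₁₄q₂₄q₂₅q₃₅ is at most 2⁵(√5 − 1)⁵, with equality when all qᵢⱼ = 2(√5 − 1). -/
open Real

lemma pentagon_aux (s x y : ℝ) (hs : s^2 = 5) (hs2 : 2 ≤ s)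
    (hx0 : 0 ≤ x) (hx4 : x ≤ 4) (hy0 : 0 ≤ y) (hy4 : y ≤ 4) :
    256*(4-x)*(4-y)*(x+y-4) ≤ 32*(s-1)^5 * (x*y) := by
  have hK : 32*(s-1)^5 = 2560*s - 5632 := by linear_combination (32*s^3 - 160*s^2 + 480*s - 1120) * hs
  rw [hK]
  rcases le_or_gt (256*(x+y-4)) (2560*s - 5632) with h | h
  · nlinarith [mul_nonneg (sub_nonneg.2 h) (mul_nonneg hx0 hy0), sq_nonneg (x+y-4)]
  · have h1 : 0 ≤ 2*s + 6 - x - y := by linarith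
    nlinarith [mul_nonneg (sq_nonneg (x+y-(4*s-4))) h1,
      mul_nonneg (le_of_lt (sub_pos.2 h)) (sq_nonneg (x-y)), hs]

theorem pentagon_product_le (q13 q14 q24 q25 q35 : ℝ)
    (h13 : q13 ∈ Set.Icc (0:ℝ) 4) (h14 : q14 ∈ Set.Icc (0:ℝ) 4)
    (h24 : q24 ∈ Set.Icc (0:ℝ) 4) (h25 : q25 ∈ Set.Icc (0:ℝ) 4)
    (h35 : q35 ∈ Set.Icc (0:ℝ) 4)
    (e1 : q14 = 4 - q13*q24/4) (e2 : q24 = 4 - q14*q25/4)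
    (e3 : q25 = 4 - q24*q35/4) (e4 : q35 = 4 - q25*q13/4)
    (e5 : q13 = 4 - q35*q14/4) :
    q13*q14*q24*q25*q35 ≤ 2^5 * (Real.sqrt 5 - 1)^5 ∧
    (q13 = 2*(Real.sqrt 5 - 1) ∧ q14 = 2*(Real.sqrt 5 - 1) ∧ q24 = 2*(Real.sqrt 5 - 1) ∧
      q25 = 2*(Real.sqrt 5 - 1) ∧ q35 = 2*(Real.sqrt 5 - 1) →
      q13*q14*q24*q25*q35 = 2^5 * (Real.sqrt 5 - 1)^5) := by
  have hs : Real.sqrt 5 ^ 2 = 5 := Real.sq_sqrt (by norm_num)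
  have hs2 : (2:ℝ) ≤ Real.sqrt 5 := by
    nlinarith [Real.sqrt_nonneg 5, hs]
  constructor
  · have hM : 0 < 2^5 * (Real.sqrt 5 - 1)^5 := by
      have h1 : (0:ℝ) < Real.sqrt 5 - 1 := by linarith
      positivity
    rcases eq_or_lt_of_le h14.1 with h0 | hq14
    · rw [← h0]; simpa using hM.le
    rcases eq_or_lt_of_le h24.1 with h0 | hq24
    · rw [← h0]; simpa using hM.le
    have key1 : q14*q24*q35 = 16*(q14+q24) - 64 := by
      linear_combination (4*q14) * e3 - 16 * e2
    have key2 : q13*q14*q24*q25*q35 = 16*(4-q14)*(4-q24)*q35 := by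
      linear_combination (4*q14*q25*q35) * e1 + (4*(16-4*q14)*q35) * e2
    have haux := pentagon_aux (Real.sqrt 5) q14 q24 hs hs2 h14.1 h14.2 h24.1 h24.2
    have hpos : 0 < q14 * q24 := mul_pos hq14 hq24
    rw [← mul_le_mul_iff_of_pos_right hpos]
    calc q13*q14*q24*q25*q35 * (q14*q24)
        = 16*(4-q14)*(4-q24)*(q14*q24*q35) := by rw [key2]; ring
      _ = 256*(4-q14)*(4-q24)*(q14+q24-4) := by rw [key1]; ring
      _ ≤ 32*(Real.sqrt 5 - 1)^5 * (q14*q24) := haux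
      _ = 2^5 * (Real.sqrt 5 - 1)^5 * (q14*q24) := by norm_num
  · rintro ⟨h1, h2, h3, h4, h5⟩
    rw [h1, h2, h3, h4, h5]; ring
end

section
/- For integers k, s ≥ 3, if gcd(k,s) does not divide 2, then ℚ(cos(2π/k), cos(2π/s)) = ℚ(cos(2π/m)) where m = lcm(k,s). -/
open Real IntermediateField Polynomial

/-!
Work in `ℚ(ζ)` with `ζ = exp(2πi/m)`, `m = lcm(k, s)`: for `d ∣ m`, `2 cos(2π/d) = η + η⁻¹` with
`η = ζ^(m/d)` a primitive `d`-th root of unity. An automorphism `ζ ↦ ζ^i` fixes `η + η⁻¹` iff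
`i ≡ ±1 (mod d)`. If it fixes both `2 cos(2π/k)` and `2 cos(2π/s)`, the two signs agree, since
otherwise `gcd(k, s) ∣ 2`; hence `i ≡ ±1 (mod m)` and it fixes `2 cos(2π/m)`, which the Galois
correspondence then puts in `ℚ(cos(2π/k), cos(2π/s))`. The reverse inclusion comes from Chebyshev
polynomials: `cos(2π/k) = T_{m/k}(cos(2π/m))`.
-/

theorem add_inv_eq_add_inv_iff {F : Type*} [Field F] {a b : F} (ha : a ≠ 0) (hb : b ≠ 0) :
    a + a⁻¹ = b + b⁻¹ ↔ a = b ∨ a = b⁻¹ := by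
  have key : a + a⁻¹ - (b + b⁻¹) = (a - b) * (a * b - 1) / (a * b) := by
    field_simp; ring
  rw [← sub_eq_zero, key, div_eq_zero_iff, mul_eq_zero, sub_eq_zero, sub_eq_zero,
    ← mul_eq_one_iff_eq_inv₀ hb]
  simp [ha, hb]

theorem IsPrimitiveRoot.pow_add_inv_eq_add_inv_iff {F : Type*} [Field F] {η : F} {k : ℕ}
    (hη : IsPrimitiveRoot η k) (hk : k ≠ 0) (i : ℕ) :
    η ^ i + (η ^ i)⁻¹ = η + η⁻¹ ↔ (k : ℤ) ∣ i - 1 ∨ (k : ℤ) ∣ i + 1 := by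
  have hη0 : η ≠ 0 := hη.ne_zero hk
  rw [add_inv_eq_add_inv_iff (pow_ne_zero i hη0) hη0, ← hη.zpow_eq_one_iff_dvd,
    ← hη.zpow_eq_one_iff_dvd, zpow_sub_one₀ hη0, zpow_add_one₀ hη0, zpow_natCast,
    mul_inv_eq_one₀ hη0, mul_eq_one_iff_eq_inv₀ hη0]

theorem Int.natCast_lcm_dvd_sub_one_or_add_one {k s : ℕ} {i : ℤ} (hgcd : ¬ k.gcd s ∣ 2)
    (hk : (k : ℤ) ∣ i - 1 ∨ (k : ℤ) ∣ i + 1) (hs : (s : ℤ) ∣ i - 1 ∨ (s : ℤ) ∣ i + 1) :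
    (k.lcm s : ℤ) ∣ i - 1 ∨ (k.lcm s : ℤ) ∣ i + 1 := by
  have hgk := Int.natCast_dvd_natCast.mpr (Nat.gcd_dvd_left k s)
  have hgs := Int.natCast_dvd_natCast.mpr (Nat.gcd_dvd_right k s)
  have hgcd2 : ¬ (k.gcd s : ℤ) ∣ 2 := by exact_mod_cast hgcd
  have hlcm {t : ℤ} (hkt : (k : ℤ) ∣ t) (hst : (s : ℤ) ∣ t) : (k.lcm s : ℤ) ∣ t :=
    Int.natCast_dvd.mpr (Nat.lcm_dvd (Int.natCast_dvd.mp hkt) (Int.natCast_dvd.mp hst))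
  rcases hk with hk | hk <;> rcases hs with hs | hs
  · exact .inl (hlcm hk hs)
  · exact absurd (by simpa using dvd_sub (hgs.trans hs) (hgk.trans hk)) hgcd2
  · exact absurd (by simpa using dvd_sub (hgk.trans hk) (hgs.trans hs)) hgcd2
  · exact .inr (hlcm hk hs)

theorem IntermediateField.mem_adjoin_of_forall_algEquiv_fixing {K E : Type*} [Field K] [Field E]
    [Algebra K E] (N : IntermediateField K E) [FiniteDimensional K N] [IsGalois K N]
    {S : Set E} (hS : S ⊆ N) (x : N)
    (hx : ∀ σ : N ≃ₐ[K] N, (∀ y : N, (y : E) ∈ S → σ y = y) → σ x = x) :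
    (x : E) ∈ adjoin K S := by
  have hxF : x ∈ adjoin K (N.val ⁻¹' S) := by
    rw [← IsGalois.fixedField_fixingSubgroup (adjoin K (N.val ⁻¹' S))]
    exact fun σ ↦ hx σ fun y hy ↦ (mem_fixingSubgroup_iff _ σ).mp σ.2 y (subset_adjoin K _ hy)
  have hmap : (adjoin K (N.val ⁻¹' S)).map N.val = adjoin K S := by
    rw [adjoin_map, Set.image_preimage_eq_of_subset (by simpa using hS)]
  exact hmap ▸ (map_mem_map _ N.val).mpr hxF

theorem IntermediateField.mem_adjoin_of_map_mem_adjoin_image {K E L : Type*} [Field K] [Field E]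
    [Field L] [Algebra K E] [Algebra K L] (f : E →ₐ[K] L) {S : Set E} {x : E}
    (h : f x ∈ adjoin K (f '' S)) : x ∈ adjoin K S := by
  rwa [← adjoin_map, map_mem_map] at h

theorem IsPrimitiveRoot.add_inv_mem_adjoin_of_lcm {K E : Type*} [Field K] [Field E] [Algebra K E]
    {k s : ℕ} (hk : k ≠ 0) (hs : s ≠ 0) (hgcd : ¬ k.gcd s ∣ 2) {ζ : E}
    (hζ : IsPrimitiveRoot ζ (k.lcm s)) :
    ζ + ζ⁻¹ ∈ K⟮ζ ^ (k.lcm s / k) + (ζ ^ (k.lcm s / k))⁻¹,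
      ζ ^ (k.lcm s / s) + (ζ ^ (k.lcm s / s))⁻¹⟯ := by
  set m := k.lcm s
  have : NeZero m := ⟨Nat.lcm_ne_zero hk hs⟩
  have : IsCyclotomicExtension {m} K K⟮ζ⟯ :=
    (isCyclotomicExtension_singleton_iff_eq_adjoin m K E _ hζ).mpr rfl
  have := IsCyclotomicExtension.finiteDimensional {m} K K⟮ζ⟯
  have := IsCyclotomicExtension.isGalois {m} K K⟮ζ⟯
  set z := AdjoinSimple.gen K ζ
  have hz : IsPrimitiveRoot z m := IsPrimitiveRoot.coe_submonoidClass_iff.mp hζ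
  have hS : {ζ ^ (m / k) + (ζ ^ (m / k))⁻¹, ζ ^ (m / s) + (ζ ^ (m / s))⁻¹} ⊆ (K⟮ζ⟯ : Set E) := by
    have hζ_mem := mem_adjoin_simple_self K ζ
    simp only [Set.insert_subset_iff, Set.singleton_subset_iff, SetLike.mem_coe]
    exact ⟨add_mem (pow_mem hζ_mem _) (inv_mem (pow_mem hζ_mem _)),
      add_mem (pow_mem hζ_mem _) (inv_mem (pow_mem hζ_mem _))⟩
  convert mem_adjoin_of_forall_algEquiv_fixing K⟮ζ⟯ hS (z + z⁻¹) ?_ using 1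
  · simp [z]
  intro σ hσ
  obtain ⟨i, -, hi⟩ := hz.eq_pow_of_pow_eq_one (hz.map_of_injective σ.injective).pow_eq_one
  have fixed_iff {d : ℕ} (hd : d ∣ m) (hd0 : d ≠ 0) :
      σ (z ^ (m / d) + (z ^ (m / d))⁻¹) = z ^ (m / d) + (z ^ (m / d))⁻¹ ↔
        (d : ℤ) ∣ i - 1 ∨ (d : ℤ) ∣ i + 1 := by
    rw [map_add, map_inv₀, map_pow, ← hi, ← pow_mul, mul_comm, pow_mul]
    exact (hz.pow (NeZero.pos m) (Nat.div_mul_cancel hd).symm).pow_add_inv_eq_add_inv_iff hd0 i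
  have hik := (fixed_iff (Nat.dvd_lcm_left k s) hk).mp (hσ _ (by simp [z]))
  have his := (fixed_iff (Nat.dvd_lcm_right k s) hs).mp (hσ _ (by simp [z]))
  have him := (fixed_iff dvd_rfl (NeZero.ne m)).mpr
    (Int.natCast_lcm_dvd_sub_one_or_add_one hgcd hik his)
  simpa [Nat.div_self (NeZero.pos m)] using him

theorem cos_two_pi_div_mem_adjoin_of_dvd {k m : ℕ} (hm : m ≠ 0) (hkm : k ∣ m) :
    cos (2 * π / k) ∈ ℚ⟮cos (2 * π / m)⟯ := by
  obtain ⟨r, rfl⟩ := hkm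
  have hr : (r : ℝ) ≠ 0 := Nat.cast_ne_zero.mpr (right_ne_zero_of_mul hm)
  have hT : cos (2 * π / k) = aeval (cos (2 * π / ↑(k * r))) (Chebyshev.T ℚ r) := by
    rw [Chebyshev.aeval_T, Chebyshev.T_real_cos, Int.cast_natCast, Nat.cast_mul, mul_comm (k : ℝ),
      ← div_div, ← mul_div_assoc, mul_div_cancel₀ _ hr]
  exact hT ▸ algebra_adjoin_le_adjoin ℚ _ (aeval_mem_adjoin_singleton ℚ _)

theorem Complex.ofReal_two_mul_cos_two_pi_div {n d : ℕ} (hn : n ≠ 0) (hd : d ∣ n) :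
    ((2 * Real.cos (2 * π / d) : ℝ) : ℂ) =
      exp (2 * π * I / n) ^ (n / d) + (exp (2 * π * I / n) ^ (n / d))⁻¹ := by
  have hd0 : (d : ℂ) ≠ 0 := Nat.cast_ne_zero.mpr (ne_zero_of_dvd_ne_zero hn hd)
  have hpow : exp (2 * π * I / n) ^ (n / d) = exp (2 * π / d * I) := by
    rw [← exp_nat_mul, Nat.cast_div hd hd0]
    congr 1
    field_simp
  rw [hpow, ← exp_neg, ← neg_mul]
  push_cast
  exact two_cos _

theorem cos_two_pi_div_lcm_mem_adjoin {k s : ℕ} (hk : k ≠ 0) (hs : s ≠ 0)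
    (hgcd : ¬ k.gcd s ∣ 2) :
    cos (2 * π / (k.lcm s : ℕ)) ∈ ℚ⟮cos (2 * π / k), cos (2 * π / s)⟯ := by
  have hm : k.lcm s ≠ 0 := Nat.lcm_ne_zero hk hs
  have hC := (Complex.isPrimitiveRoot_exp _ hm).add_inv_mem_adjoin_of_lcm (K := ℚ) hk hs hgcd
  have hCm := Complex.ofReal_two_mul_cos_two_pi_div hm dvd_rfl
  rw [Nat.div_self (Nat.pos_of_ne_zero hm), pow_one] at hCm
  rw [← hCm, ← Complex.ofReal_two_mul_cos_two_pi_div hm (Nat.dvd_lcm_left k s),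
    ← Complex.ofReal_two_mul_cos_two_pi_div hm (Nat.dvd_lcm_right k s)] at hC
  have h2 : 2 * cos (2 * π / (k.lcm s : ℕ)) ∈ ℚ⟮2 * cos (2 * π / k), 2 * cos (2 * π / s)⟯ :=
    mem_adjoin_of_map_mem_adjoin_image (Complex.ofRealAm.restrictScalars ℚ)
      (by rwa [Set.image_pair])
  have hle : ℚ⟮2 * cos (2 * π / k), 2 * cos (2 * π / s)⟯ ≤ ℚ⟮cos (2 * π / k), cos (2 * π / s)⟯ := by
    rw [adjoin_le_iff, Set.insert_subset_iff, Set.singleton_subset_iff]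
    exact ⟨mul_mem (ofNat_mem _ 2) (subset_adjoin _ _ (by simp)),
      mul_mem (ofNat_mem _ 2) (subset_adjoin _ _ (by simp))⟩
  simpa using div_mem (hle h2) (ofNat_mem _ 2)

theorem F_ks_eq_F_lcm (k s : ℕ) (hk : 3 ≤ k) (hs : 3 ≤ s)
    (hgcd : ¬ (Nat.gcd k s ∣ 2)) :
    ℚ⟮Real.cos (2*π/k), Real.cos (2*π/s)⟯ = ℚ⟮Real.cos (2*π/(Nat.lcm k s))⟯ := by
  have hk0 : k ≠ 0 := by omega
  have hs0 : s ≠ 0 := by omega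
  have hm : k.lcm s ≠ 0 := Nat.lcm_ne_zero hk0 hs0
  apply le_antisymm
  · rw [adjoin_le_iff, Set.insert_subset_iff, Set.singleton_subset_iff]
    exact ⟨cos_two_pi_div_mem_adjoin_of_dvd hm (Nat.dvd_lcm_left k s),
      cos_two_pi_div_mem_adjoin_of_dvd hm (Nat.dvd_lcm_right k s)⟩
  · exact adjoin_simple_le_iff.mpr (cos_two_pi_div_lcm_mem_adjoin hk0 hs0 hgcd)
end

section
/- Let K be a totally real number field of degree N over ℚ containing F_l = ℚ(cos(2π/l)) for some l ≥ 3, and let α ∈ O_K be a nonzero algebraic integer such that 0 < σ(α) < a·σ(sin²(π/l)) for all real embeddings σ ≠ id, and |α| < b for the identity embedding, where 0 < a < 4 and b ≥ a. Then N·(ln(2/√a) − ln(γ(l))/φ(l)) < ln√(b/a) − ln sin(π/l), where γ(l) = p if l = pᵗ > 2 is a prime power and 1 otherwise. -/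
/-!
For `σ ≠ id` the bounds `0 < σ α < a σ(sin²(π/l))`, together with `|α| < b` and
`1 ≤ |N(α)| = ∏_σ |σ α|`, give `sin²(π/l) < b a^(N-1) ∏_σ σ(sin²(π/l))`. The full product
`∏_σ σ(4 sin²(π/l))` is a power of the norm of `4 sin²(π/l)` from `F_l = ℚ(sin²(π/l))`, which
is `±γ(l)`: with `ζ = exp(2πi/l)` we have `4 sin²(π/l) = (ζ - 1)(ζ⁻¹ - 1)`, whose norm from
`ℚ(ζ)` is `Φ_l(1)² = γ(l)²`, and `[ℚ(ζ) : F_l] = 2`. Hence `∏_σ σ(sin²(π/l)) = γ(l)^(2N/φ(l)) / 4^N`,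
and taking logarithms gives the bound.
-/

open Real IntermediateField

/-- γ(l) = p if l = pᵗ > 2 is a prime power, and 1 otherwise. -/
def gammaNik (l : ℕ) : ℕ := if IsPrimePow l then l.minFac else 1

open Polynomial Finset

lemma gammaNik_pos (l : ℕ) : 0 < gammaNik l := by
  unfold gammaNik
  split_ifs
  · exact Nat.minFac_pos l
  · exact one_pos

lemma eval_one_cyclotomic_eq_gammaNik {l : ℕ} (hl : 2 ≤ l) :
    eval 1 (cyclotomic l ℤ) = gammaNik l := by
  unfold gammaNik
  split_ifs with h
  · obtain ⟨p, k, hp, hk, rfl⟩ := h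
    have : Fact p.Prime := ⟨hp.nat_prime⟩
    obtain ⟨k, rfl⟩ := Nat.exists_eq_add_one_of_ne_zero hk.ne'
    rw [eval_one_cyclotomic_prime_pow, Nat.Prime.pow_minFac hp.nat_prime (by omega)]
  · rw [eval_one_cyclotomic_not_prime_pow, Nat.cast_one]
    rintro p hp (_ | k) rfl
    · simp at hl
    · exact h ⟨p, k + 1, hp.prime, k.succ_pos, rfl⟩

noncomputable def minpolyNorm (K : Type*) {L : Type*} [Field K] [Ring L] [Algebra K L] (x : L) :
    K :=
  (-1) ^ (minpoly K x).natDegree * (minpoly K x).coeff 0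

lemma Algebra.norm_eq_minpolyNorm_pow {K L : Type*} [Field K] [Field L] [Algebra K L]
    [FiniteDimensional K L] (x : L) :
    Algebra.norm K x = minpolyNorm K x ^ Module.finrank K⟮x⟯ L := by
  have hx : IsIntegral K x := _root_.IsIntegral.of_finite K x
  have h := PowerBasis.norm_gen_eq_coeff_zero_minpoly (IntermediateField.adjoin.powerBasis hx)
  rw [IntermediateField.adjoin.powerBasis_gen, minpoly_gen,
    IntermediateField.adjoin.powerBasis_dim] at h
  rw [norm_eq_norm_adjoin K x, h, minpolyNorm]

lemma Complex.exp_mul_I_sub_one_mul_inv_sub_one (θ : ℂ) :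
    (exp (θ * I) - 1) * ((exp (θ * I))⁻¹ - 1) = 4 * sin (θ / 2) ^ 2 := by
  have hcos := cos_two_mul_eq_one_sub (θ / 2)
  rw [mul_div_cancel₀ θ two_ne_zero] at hcos
  have hmul : exp (θ * I) * exp (-θ * I) = 1 := by
    rw [← exp_add]
    simp
  rw [← exp_neg, ← neg_mul]
  linear_combination hmul + two_cos θ - 2 * hcos

lemma finrank_adjoin_sub_one_mul_inv_sub_one_le_two {K L : Type*} [Field K] [Field L]
    [Algebra K L] {z : L} (hz : z ≠ 0) (htop : K⟮z⟯ = ⊤) :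
    Module.finrank K⟮(z - 1) * (z⁻¹ - 1)⟯ L ≤ 2 := by
  set u := (z - 1) * (z⁻¹ - 1) with hu
  set p : K⟮u⟯[X] := C 1 * X ^ 2 + C (AdjoinSimple.gen K u - 2) * X + C 1
  have hpz : aeval z p = 0 := by
    simp only [p, map_add, map_mul, map_pow, aeval_X, aeval_C, map_sub, map_one, map_ofNat,
      AdjoinSimple.algebraMap_gen, hu]
    field_simp
    ring
  have hp : p.natDegree = 2 := natDegree_quadratic one_ne_zero
  have hp0 : p ≠ 0 := by
    rintro h
    simp [h] at hp
  have hzint : IsIntegral K⟮u⟯ z := IsAlgebraic.isIntegral ⟨p, hp0, hpz⟩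
  rw [← finrank_top', ← adjoin_eq_top_of_adjoin_eq_top K htop, adjoin.finrank hzint, ← hp]
  exact natDegree_le_of_dvd (minpoly.dvd _ z hpz) hp0

lemma im_eq_zero_of_mem_adjoin_simple {L : Type*} [Field L] [Algebra ℚ L] (φ : L →ₐ[ℚ] ℂ)
    {x y : L} (hx : (φ x).im = 0) (hy : y ∈ ℚ⟮x⟯) : (φ y).im = 0 := by
  let R : IntermediateField ℚ ℂ := (⊥ : IntermediateField ℝ ℂ).restrictScalars ℚ
  have hxR : ℚ⟮φ x⟯ ≤ R := by
    rw [adjoin_simple_le_iff]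
    exact mem_bot.2 ⟨(φ x).re, Complex.ext rfl (by simp [hx])⟩
  have hyR : φ y ∈ R := by
    apply hxR
    rw [← Set.image_singleton, ← adjoin_map]
    exact ⟨y, hy, rfl⟩
  obtain ⟨t, ht⟩ := mem_bot.1 hyR
  rw [← ht]
  simp

section Cyclotomic

variable {l : ℕ} {L : Type*} [Field L] [Algebra ℚ L] {z : L} {φ : L →ₐ[ℚ] ℂ}

lemma map_sub_one_mul_inv_sub_one_eq_four_mul_sin_sq
    (hφ : φ z = Complex.exp (2 * π * Complex.I / l)) :
    φ ((z - 1) * (z⁻¹ - 1)) = ((4 * sin (π / l) ^ 2 : ℝ) : ℂ) := by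
  rw [map_mul, map_sub, map_sub, map_inv₀, map_one, hφ, mul_div_right_comm,
    Complex.exp_mul_I_sub_one_mul_inv_sub_one]
  push_cast
  ring_nf

variable [IsCyclotomicExtension {l} ℚ L]

lemma IsPrimitiveRoot.exists_algHom_eq_exp (hz : IsPrimitiveRoot z l) (hl : 0 < l) :
    ∃ φ : L →ₐ[ℚ] ℂ, φ z = Complex.exp (2 * π * Complex.I / l) := by
  have : NeZero l := ⟨hl.ne'⟩
  let e := hz.embeddingsEquivPrimitiveRoots ℂ (cyclotomic.irreducible_rat hl)
  refine ⟨e.symm ⟨_, (mem_primitiveRoots hl).2 (Complex.isPrimitiveRoot_exp l hl.ne')⟩, ?_⟩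
  rw [← hz.embeddingsEquivPrimitiveRoots_apply_coe ℂ (cyclotomic.irreducible_rat hl),
    Equiv.apply_symm_apply]

lemma IsPrimitiveRoot.adjoin_simple_eq_top [NeZero l] (hz : IsPrimitiveRoot z l) : ℚ⟮z⟯ = ⊤ :=
  have := IsCyclotomicExtension.integral {l} ℚ L
  toSubalgebra_injective <| by
    rw [adjoin_simple_toSubalgebra_of_isAlgebraic (Algebra.IsAlgebraic.isAlgebraic z),
      top_toSubalgebra, IsCyclotomicExtension.adjoin_primitive_root_eq_top hz]

lemma IsPrimitiveRoot.norm_sub_one_mul_inv_sub_one (hz : IsPrimitiveRoot z l) (hl : 2 < l) :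
    Algebra.norm ℚ ((z - 1) * (z⁻¹ - 1)) = ((eval 1 (cyclotomic l ℤ) : ℤ) : ℚ) ^ 2 := by
  have : NeZero l := ⟨by omega⟩
  have hirr := cyclotomic.irreducible_rat (NeZero.pos l)
  rw [map_mul, hz.sub_one_norm_eq_eval_cyclotomic hl hirr,
    hz.inv.sub_one_norm_eq_eval_cyclotomic hl hirr, sq]

lemma IsPrimitiveRoot.finrank_adjoin_sub_one_mul_inv_sub_one (hz : IsPrimitiveRoot z l)
    (hl : 3 ≤ l) (hφ : φ z = Complex.exp (2 * π * Complex.I / l)) :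
    Module.finrank ℚ⟮(z - 1) * (z⁻¹ - 1)⟯ L = 2 := by
  have : NeZero l := ⟨by omega⟩
  have : FiniteDimensional ℚ L := IsCyclotomicExtension.finiteDimensional {l} ℚ L
  refine le_antisymm (finrank_adjoin_sub_one_mul_inv_sub_one_le_two (hz.ne_zero (NeZero.ne l))
    hz.adjoin_simple_eq_top) ?_
  have hz_not_real : (φ z).im ≠ 0 := by
    have h3 : (3 : ℝ) ≤ l := by exact_mod_cast hl
    rw [hφ, show 2 * π * Complex.I / l = (2 * π / l : ℝ) * Complex.I by push_cast; ring,
      Complex.exp_ofReal_mul_I_im]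
    refine (sin_pos_of_pos_of_lt_pi (by positivity) ?_).ne'
    rw [div_lt_iff₀ (by positivity)]
    nlinarith [pi_pos]
  have hu_real : (φ ((z - 1) * (z⁻¹ - 1))).im = 0 := by
    rw [map_sub_one_mul_inv_sub_one_eq_four_mul_sin_sq hφ, Complex.ofReal_im]
  have hne : Module.finrank ℚ⟮(z - 1) * (z⁻¹ - 1)⟯ L ≠ 1 := fun h =>
    hz_not_real <| im_eq_zero_of_mem_adjoin_simple φ hu_real <|
      (finrank_eq_one_iff_eq_top.1 h).symm ▸ mem_top
  have hpos : 0 < Module.finrank ℚ⟮(z - 1) * (z⁻¹ - 1)⟯ L := Module.finrank_pos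
  omega

end Cyclotomic

theorem abs_minpolyNorm_four_mul_sin_sq {l : ℕ} (hl : 3 ≤ l) :
    |minpolyNorm ℚ (4 * sin (π / l) ^ 2)| = gammaNik l ∧
      2 * (minpoly ℚ (4 * sin (π / l) ^ 2)).natDegree = l.totient := by
  have : NeZero l := ⟨by omega⟩
  let L := CyclotomicField l ℚ
  have : IsCyclotomicExtension {l} ℚ L := CyclotomicField.isCyclotomicExtension l ℚ
  have : FiniteDimensional ℚ L := IsCyclotomicExtension.finiteDimensional {l} ℚ L
  have hz := IsCyclotomicExtension.zeta_spec l ℚ L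
  set z := IsCyclotomicExtension.zeta l ℚ L
  obtain ⟨φ, hφ⟩ := hz.exists_algHom_eq_exp (NeZero.pos l)
  set u := (z - 1) * (z⁻¹ - 1)
  have hmin : minpoly ℚ u = minpoly ℚ (4 * sin (π / l) ^ 2) := by
    rw [← minpoly.algHom_eq φ φ.injective u, map_sub_one_mul_inv_sub_one_eq_four_mul_sin_sq hφ,
      ← Complex.coe_algebraMap, minpoly.algebraMap_eq (algebraMap ℝ ℂ).injective]
  have hrank := hz.finrank_adjoin_sub_one_mul_inv_sub_one hl hφ
  constructor
  · have hnorm := Algebra.norm_eq_minpolyNorm_pow (K := ℚ) u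
    rw [hz.norm_sub_one_mul_inv_sub_one (by omega), eval_one_cyclotomic_eq_gammaNik (by omega),
      hrank, minpolyNorm, hmin, ← minpolyNorm] at hnorm
    rw [← abs_of_nonneg (Nat.cast_nonneg (gammaNik l) : (0 : ℚ) ≤ gammaNik l),
      ← sq_eq_sq_iff_abs_eq_abs, ← hnorm]
    norm_cast
  · rw [← IsCyclotomicExtension.finrank L (cyclotomic.irreducible_rat (NeZero.pos l)),
      ← Module.finrank_mul_finrank ℚ ℚ⟮u⟯ L, hrank, adjoin.finrank (.of_finite ℚ u), hmin,
      mul_comm]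

lemma NumberField.prod_embeddings_real_eq_norm {K : Type*} [Field K] [NumberField K]
    (htot : Nat.card (K →+* ℝ) = Module.finrank ℚ K) (x : K) :
    ∏ σ : K →+* ℝ, σ x = Algebra.norm ℚ x := by
  let f : (K →+* ℝ) → (K →+* ℂ) := Complex.ofRealHom.comp
  have hf : Function.Bijective f := by
    refine (Fintype.bijective_iff_injective_and_card f).2 ⟨fun σ τ h => ?_, ?_⟩
    · ext y
      exact Complex.ofReal_injective (RingHom.congr_fun h y)
    · rw [Fintype.card_eq_nat_card, htot, NumberField.Embeddings.card K ℂ]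
  apply Complex.ofReal_injective
  rw [Complex.ofReal_prod, Fintype.prod_bijective f hf (fun σ => (σ x : ℂ)) (fun τ => τ x)
      (fun σ => rfl),
    Fintype.prod_equiv (RingHom.equivRatAlgHom K ℂ) (fun τ => τ x) (fun τ => τ x) (fun τ => rfl),
    ← Algebra.norm_eq_prod_embeddings ℚ ℂ x]
  simp

lemma NumberField.one_le_abs_norm {K : Type*} [Field K] [NumberField K] {x : K}
    (hint : IsIntegral ℤ x) (hx : x ≠ 0) : 1 ≤ |Algebra.norm ℚ x| := by
  obtain ⟨m, hm⟩ := IsIntegrallyClosed.isIntegral_iff.mp (Algebra.isIntegral_norm ℚ hint)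
  have hm0 : m ≠ 0 := by
    rintro rfl
    exact hx (by simpa using hm.symm)
  rw [← hm, eq_intCast, ← Int.cast_abs]
  exact_mod_cast Int.one_le_abs hm0

lemma NumberField.exists_prod_embeddings_eq_gammaNik_pow {K : Type*} [Field K] [NumberField K]
    (htot : Nat.card (K →+* ℝ) = Module.finrank ℚ K) {l : ℕ} (hl : 3 ≤ l) {x : K}
    (hx : minpoly ℚ x = minpoly ℚ (4 * sin (π / l) ^ 2)) (hpos : ∀ σ : K →+* ℝ, 0 < σ x) :
    ∃ e : ℕ, e * l.totient = 2 * Module.finrank ℚ K ∧ ∏ σ : K →+* ℝ, σ x = gammaNik l ^ e := by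
  obtain ⟨hnorm, hdeg⟩ := abs_minpolyNorm_four_mul_sin_sq hl
  refine ⟨Module.finrank ℚ⟮x⟯ K, ?_, ?_⟩
  · rw [← hdeg, ← hx, ← adjoin.finrank (.of_finite ℚ x), ← Module.finrank_mul_finrank ℚ ℚ⟮x⟯ K]
    ring
  · have hx' : minpolyNorm ℚ x = minpolyNorm ℚ (4 * sin (π / l) ^ 2) := by
      rw [minpolyNorm, minpolyNorm, hx]
    rw [← abs_of_pos (prod_pos fun σ _ => hpos σ), prod_embeddings_real_eq_norm htot,
      Algebra.norm_eq_minpolyNorm_pow, hx', ← Rat.cast_abs, abs_pow, hnorm]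
    norm_cast

lemma exists_four_pow_mul_prod_embeddings_sin_sq (K : IntermediateField ℚ ℝ) [NumberField K]
    (htot : Nat.card (K →+* ℝ) = Module.finrank ℚ K) {l : ℕ} (hl : 3 ≤ l)
    (hsin : sin (π / l) ^ 2 ∈ K) (hpos : ∀ σ : K →+* ℝ, 0 < σ ⟨sin (π / l) ^ 2, hsin⟩) :
    ∃ e : ℕ, e * l.totient = 2 * Module.finrank ℚ K ∧
      4 ^ Module.finrank ℚ K * ∏ σ : K →+* ℝ, σ ⟨sin (π / l) ^ 2, hsin⟩ = gammaNik l ^ e := by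
  set s : K := ⟨sin (π / l) ^ 2, hsin⟩
  obtain ⟨e, he, hprod⟩ := NumberField.exists_prod_embeddings_eq_gammaNik_pow htot hl
    (x := 4 * s) (by rw [← minpoly.algebraMap_eq (algebraMap K ℝ).injective]; rfl)
    (fun σ => by rw [map_mul, map_ofNat]; exact mul_pos four_pos (hpos σ))
  refine ⟨e, he, ?_⟩
  rw [← hprod]
  simp only [map_mul, map_ofNat, prod_mul_distrib, prod_const, card_univ,
    Fintype.card_eq_nat_card, htot]

lemma lt_mul_pow_mul_prod_of_one_le_abs_prod {ι : Type*} [Fintype ι] [DecidableEq ι]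
    {f g : ι → ℝ} {a b : ℝ} (i₀ : ι) (hg : 0 < g i₀) (h1 : 1 ≤ |∏ i, f i|) (hi₀ : |f i₀| < b)
    (hf : ∀ i ≠ i₀, 0 < f i ∧ f i < a * g i) :
    g i₀ < b * a ^ (Fintype.card ι - 1) * ∏ i, g i := by
  have hf' : ∀ i ∈ univ.erase i₀, 0 < f i ∧ f i < a * g i := fun i hi => hf i (ne_of_mem_erase hi)
  have hpos : 0 < ∏ i ∈ univ.erase i₀, f i := prod_pos fun i hi => (hf' i hi).1
  have hle : ∏ i ∈ univ.erase i₀, f i ≤ a ^ (Fintype.card ι - 1) * ∏ i ∈ univ.erase i₀, g i := by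
    rw [← card_univ, ← card_erase_of_mem (mem_univ i₀), ← prod_const, ← prod_mul_distrib]
    exact prod_le_prod (fun i hi => (hf' i hi).1.le) (fun i hi => (hf' i hi).2.le)
  rw [← mul_prod_erase univ f (mem_univ i₀), abs_mul, abs_of_pos hpos] at h1
  rw [← mul_prod_erase univ g (mem_univ i₀)]
  calc g i₀ ≤ g i₀ * (|f i₀| * ∏ i ∈ univ.erase i₀, f i) := le_mul_of_one_le_right hg.le h1
    _ < g i₀ * (b * ∏ i ∈ univ.erase i₀, f i) := by gcongr
    _ ≤ g i₀ * (b * (a ^ (Fintype.card ι - 1) * ∏ i ∈ univ.erase i₀, g i)) := by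
      gcongr
      exact (abs_nonneg _).trans hi₀.le
    _ = b * a ^ (Fintype.card ι - 1) * (g i₀ * ∏ i ∈ univ.erase i₀, g i) := by ring

lemma mul_log_two_div_sqrt_sub_lt {N e m : ℕ} {a b c t : ℝ} (hN : 1 ≤ N) (hm : 0 < m)
    (he : e * m = 2 * N) (ha : 0 < a) (hb : 0 < b) (hc : 0 < c) (ht : 0 < t)
    (h : 4 ^ N * t ^ 2 < b * a ^ (N - 1) * c ^ e) :
    N * (log (2 / √a) - log c / m) < log √(b / a) - log t := by
  have hlog := Real.log_lt_log (by positivity) h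
  rw [log_mul (by positivity) (by positivity), log_mul (by positivity) (by positivity),
    log_mul (by positivity) (by positivity), log_pow, log_pow, log_pow, log_pow,
    show (4 : ℝ) = 2 ^ 2 by norm_num, log_pow, Nat.cast_sub hN] at hlog
  have he' : (e : ℝ) = 2 * N / m := by
    rw [eq_div_iff (by positivity)]
    exact_mod_cast he
  rw [log_div two_ne_zero (sqrt_pos.2 ha).ne', log_sqrt ha.le, log_sqrt (by positivity),
    log_div hb.ne' ha.ne']
  rw [he'] at hlog
  have : (N : ℝ) * (log c / m) = 2 * N / m * log c / 2 := by ring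
  linarith

theorem norm_method_B_general (l : ℕ) (hl : 3 ≤ l) (a b : ℝ)
    (ha0 : 0 < a)
    (K : IntermediateField ℚ ℝ) [FiniteDimensional ℚ K]
    (htotreal : Nat.card (K →+* ℝ) = Module.finrank ℚ K)
    (hsin : Real.sin (π/l)^2 ∈ K)
    (α : K) (hint : IsIntegral ℤ α) (hα : α ≠ 0)
    (hσ : ∀ σ : K →+* ℝ, σ ≠ (algebraMap K ℝ : K →+* ℝ) →
      0 < σ α ∧ σ α < a * σ ⟨Real.sin (π/l)^2, hsin⟩)
    (hid : |(algebraMap K ℝ) α| < b) :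
    (Module.finrank ℚ K : ℝ) *
        (Real.log (2 / Real.sqrt a) - Real.log (gammaNik l) / (Nat.totient l)) <
      Real.log (Real.sqrt (b / a)) - Real.log (Real.sin (π/l)) := by
  have : NumberField K := ⟨⟩
  set s : K := ⟨sin (π / l) ^ 2, hsin⟩
  have hsin_pos : 0 < sin (π / l) :=
    sin_pos_of_pos_of_lt_pi (by positivity) (div_lt_self pi_pos (by norm_cast; omega))
  have hs_pos : ∀ σ : K →+* ℝ, 0 < σ s := fun σ => by
    by_cases hσid : σ = algebraMap K ℝ
    · exact hσid ▸ pow_pos hsin_pos 2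
    · exact pos_of_mul_pos_right ((hσ σ hσid).1.trans (hσ σ hσid).2) ha0.le
  obtain ⟨e, he, hprod⟩ := exists_four_pow_mul_prod_embeddings_sin_sq K htotreal hl hsin hs_pos
  have hnorm : 1 ≤ |∏ σ : K →+* ℝ, σ α| := by
    rw [NumberField.prod_embeddings_real_eq_norm htotreal, ← Rat.cast_abs]
    exact_mod_cast NumberField.one_le_abs_norm hint hα
  classical
  have hlt := lt_mul_pow_mul_prod_of_one_le_abs_prod (algebraMap K ℝ) (hs_pos _) hnorm hid hσ
  rw [Fintype.card_eq_nat_card, htotreal] at hlt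
  refine mul_log_two_div_sqrt_sub_lt Module.finrank_pos (Nat.totient_pos.2 (by omega)) he ha0
    ((abs_nonneg _).trans_lt hid) (by exact_mod_cast gammaNik_pos l) hsin_pos ?_
  calc 4 ^ Module.finrank ℚ K * sin (π / l) ^ 2
      < 4 ^ Module.finrank ℚ K * (b * a ^ (Module.finrank ℚ K - 1) * ∏ σ : K →+* ℝ, σ s) := by
        gcongr
        exact hlt
    _ = b * a ^ (Module.finrank ℚ K - 1) * gammaNik l ^ e := by
        rw [← hprod]
        ring

theorem norm_method_B (l : ℕ) (hl : 3 ≤ l) (a b : ℝ)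
    (ha0 : 0 < a) (ha4 : a < 4) (hab : a ≤ b)
    (K : IntermediateField ℚ ℝ) [FiniteDimensional ℚ K]
    (htotreal : Nat.card (K →+* ℝ) = Module.finrank ℚ K)
    (hcos : Real.cos (2*π/l) ∈ K)
    (hsin : Real.sin (π/l)^2 ∈ K)
    (α : K) (hint : IsIntegral ℤ α) (hα : α ≠ 0)
    (hσ : ∀ σ : K →+* ℝ, σ ≠ (algebraMap K ℝ : K →+* ℝ) →
      0 < σ α ∧ σ α < a * σ ⟨Real.sin (π/l)^2, hsin⟩)
    (hid : |(algebraMap K ℝ) α| < b) :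
    (Module.finrank ℚ K : ℝ) *
        (Real.log (2 / Real.sqrt a) - Real.log (gammaNik l) / (Nat.totient l)) <
      Real.log (Real.sqrt (b / a)) - Real.log (Real.sin (π/l)) :=
  norm_method_B_general l hl a b ha0 K htotreal hsin α hint hα hσ hid
end

section
/- Suppose α is a totally real algebraic integer generating a field K = ℚ(α) such that 0 < σ(α) < 3 for every real embedding σ ≠ id and 4 < α < 196. Then the degree [K:ℚ] is at most 76. -/
/-!
Fekete's method with a single auxiliary polynomial `P ∈ ℤ[X]`. For an algebraic integer `x` with
`P(x) ≠ 0`, the product of `|P(z)|` over the complex conjugates `z` of `x` is the absolute value of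
the resultant of `minpoly ℤ x` and `P`, a nonzero integer, so it is at least `1`. For
`P(x) = h(x² - 3x + 1)` with `h(v) = v (v² - 1)²` and `α` of degree `n`, each of the `n - 1`
conjugates in `(0, 3)` contributes at most `2/5` and `α` itself at most `196¹⁰`, so
`1 ≤ 196¹⁰ (2/5)ⁿ⁻¹`, which fails for `n ≥ 77`.
-/

open Polynomial

theorem one_le_prod_norm_aeval_aroots_minpoly {K : Type*} [Field K] [CharZero K] {x : K}
    (hx : IsIntegral ℤ x) {P : ℤ[X]} (hP : aeval x P ≠ 0) :
    1 ≤ (((minpoly ℚ x).aroots ℂ).map fun z ↦ ‖aeval z P‖).prod := by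
  have hf := minpoly.monic hx
  have hmin : minpoly ℚ x = (minpoly ℤ x).map (algebraMap ℤ ℚ) :=
    minpoly.isIntegrallyClosed_eq_field_fractions' ℚ hx
  have hres0 : resultant (minpoly ℤ x) P ≠ 0 := by
    have hcop : IsCoprime (minpoly ℚ x) (P.map (algebraMap ℤ ℚ)) :=
      (minpoly.irreducible hx.tower_top).coprime_iff_not_dvd.2 fun h ↦
        hP (by rwa [minpoly.dvd_iff, aeval_map_algebraMap] at h)
    intro h
    have := congrArg (algebraMap ℤ ℚ) h
    rw [map_zero, ← resultant_map_map, ← hf.natDegree_map (algebraMap ℤ ℚ), ← hmin,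
      ← natDegree_map_eq_of_injective (algebraMap ℤ ℚ).injective_int P,
      resultant_eq_zero_iff] at this
    exact this.2 hcop
  have hres : (((minpoly ℤ x).map (algebraMap ℤ ℂ)).roots.map fun z ↦ aeval z P).prod
      = algebraMap ℤ ℂ (resultant (minpoly ℤ x) P) := by
    have := resultant_eq_prod_eval ((minpoly ℤ x).map (algebraMap ℤ ℂ)) (P.map (algebraMap ℤ ℂ))
      P.natDegree natDegree_map_le (IsAlgClosed.splits _)
    rw [resultant_map_map, (hf.map _).leadingCoeff, one_pow, one_mul, hf.natDegree_map] at this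
    simp only [eval_map_algebraMap] at this
    exact this.symm
  calc (1 : ℝ) ≤ |((resultant (minpoly ℤ x) P : ℤ) : ℝ)| := by exact_mod_cast Int.one_le_abs hres0
    _ = ‖algebraMap ℤ ℂ (resultant (minpoly ℤ x) P)‖ := by simp
    _ = _ := by
      rw [← hres, hmin, aroots, Polynomial.map_map, ← IsScalarTower.algebraMap_eq]
      exact (map_multiset_prod (normHom : ℂ →*₀ ℝ) _).trans (congrArg _ (Multiset.map_map _ _ _))

theorem Complex.aeval_ofReal {R : Type*} [CommSemiring R] [Algebra R ℝ] [Algebra R ℂ]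
    [IsScalarTower R ℝ ℂ] (p : R[X]) (x : ℝ) : aeval (x : ℂ) p = aeval x p := by
  rw [← Complex.coe_algebraMap, aeval_algebraMap_apply]

theorem one_le_mul_pow_natDegree_minpoly_sub_one {x : ℝ} (hx : IsIntegral ℤ x) {P : ℤ[X]}
    {M r : ℝ} (hP : aeval x P ≠ 0) (hM : |aeval x P| ≤ M)
    (hr : ∀ z ∈ (minpoly ℚ x).aroots ℂ, z ≠ x → ‖aeval z P‖ ≤ r) :
    1 ≤ M * r ^ ((minpoly ℚ x).natDegree - 1) := by
  classical
  set s := (minpoly ℚ x).aroots ℂ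
  have hxs : (x : ℂ) ∈ s := by
    rw [mem_aroots, Complex.aeval_ofReal, minpoly.aeval, Complex.ofReal_zero]
    exact ⟨minpoly.ne_zero hx.tower_top, rfl⟩
  have hnodup : s.Nodup := nodup_roots ((minpoly.irreducible hx.tower_top).separable.map)
  have hcard : (s.erase (x : ℂ)).card = (minpoly ℚ x).natDegree - 1 := by
    rw [Multiset.card_erase_of_mem hxs, IsAlgClosed.card_aroots_eq_natDegree, Nat.pred_eq_sub_one]
  have hrest :
      ((s.erase (x : ℂ)).map fun z ↦ ‖aeval z P‖).prod ≤ r ^ ((minpoly ℚ x).natDegree - 1) := by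
    rw [← hcard, ← Multiset.prod_replicate, ← Multiset.map_const']
    refine Multiset.prod_map_le_prod_map₀ _ _ (fun _ _ ↦ norm_nonneg _) fun z hz ↦ ?_
    rw [hnodup.mem_erase_iff] at hz
    exact hr z hz.2 hz.1
  calc 1 ≤ (s.map fun z ↦ ‖aeval z P‖).prod := one_le_prod_norm_aeval_aroots_minpoly hx hP
    _ = ‖aeval (x : ℂ) P‖ * ((s.erase (x : ℂ)).map fun z ↦ ‖aeval z P‖).prod :=
      (Multiset.prod_map_erase hxs).symm
    _ ≤ M * r ^ ((minpoly ℚ x).natDegree - 1) := by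
      rw [Complex.aeval_ofReal, Complex.norm_real, Real.norm_eq_abs]
      exact mul_le_mul hM hrest (Multiset.prod_map_nonneg fun _ _ ↦ norm_nonneg _)
        ((abs_nonneg _).trans hM)

/-- `x ↦ x² - 3x + 1` maps `(0, 3)` into `[-5/4, 1)`, where `|v (v² - 1)²| ≤ 2/5`. -/
noncomputable def auxPoly : ℤ[X] := (X * (X ^ 2 - 1) ^ 2 : ℤ[X]).comp (X ^ 2 - 3 * X + 1)

theorem aeval_auxPoly {A : Type*} [CommRing A] (x : A) :
    aeval x auxPoly = (x ^ 2 - 3 * x + 1) * ((x ^ 2 - 3 * x + 1) ^ 2 - 1) ^ 2 := by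
  simp only [auxPoly, aeval_comp, map_mul, map_sub, map_pow, map_add, map_one, aeval_X, map_ofNat]

theorem mul_sq_sub_one_sq_le {t : ℝ} (h₀ : 0 ≤ t) (h₁ : t ≤ 5 / 4) :
    t * (t ^ 2 - 1) ^ 2 ≤ 2 / 5 := by
  rcases le_total t 1 with ht | ht
  · nlinarith [sq_nonneg (t ^ 2 - 1 / 5), sq_nonneg (t - 1),
      mul_nonneg h₀ (sq_nonneg (t ^ 2 - 1 / 5)), mul_nonneg h₀ (sq_nonneg (t - 1))]
  · have hsq : (t ^ 2 - 1) ^ 2 ≤ (9 / 16) ^ 2 :=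
      pow_le_pow_left₀ (by nlinarith) (by nlinarith) 2
    nlinarith

theorem abs_aeval_auxPoly_le {x : ℝ} (h₀ : 0 < x) (h₃ : x < 3) : |aeval x auxPoly| ≤ 2 / 5 := by
  rw [aeval_auxPoly]
  set v := x ^ 2 - 3 * x + 1
  have hv : |v| ≤ 5 / 4 := abs_le.2 ⟨by nlinarith [sq_nonneg (x - 3 / 2)], by nlinarith⟩
  rw [abs_mul, abs_sq, ← sq_abs v]
  exact mul_sq_sub_one_sq_le (abs_nonneg v) hv

theorem aeval_auxPoly_pos {x : ℝ} (hx : 3 < x) : 0 < aeval x auxPoly := by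
  have hv : 1 < x ^ 2 - 3 * x + 1 := by nlinarith
  rw [aeval_auxPoly]
  exact mul_pos (by linarith) (pow_pos (by nlinarith) 2)

theorem aeval_auxPoly_le_pow_ten {x : ℝ} (hx : 3 < x) : aeval x auxPoly ≤ x ^ 10 := by
  set v := x ^ 2 - 3 * x + 1
  have hv₁ : 1 ≤ v := by nlinarith
  have hvx : v ≤ x ^ 2 := by nlinarith
  calc aeval x auxPoly = v * (v ^ 2 - 1) ^ 2 := aeval_auxPoly x
    _ ≤ v * (v ^ 2) ^ 2 := by gcongr <;> nlinarith
    _ = v ^ 5 := by ring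
    _ ≤ (x ^ 2) ^ 5 := by gcongr
    _ = x ^ 10 := by ring

theorem degree_bound_76 (α : ℝ) (hint : IsIntegral ℤ α)
    (htotreal : ∀ z : ℂ, Polynomial.aeval z (minpoly ℚ α) = 0 → z.im = 0)
    (hconj : ∀ x : ℝ, Polynomial.aeval x (minpoly ℚ α) = 0 → x ≠ α → 0 < x ∧ x < 3)
    (h1 : 4 < α) (h2 : α < 196) :
    (minpoly ℚ α).natDegree ≤ 76 := by
  have hpos := aeval_auxPoly_pos (by linarith : 3 < α)
  have hα : |aeval α auxPoly| ≤ 196 ^ 10 := by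
    rw [abs_of_pos hpos]
    exact (aeval_auxPoly_le_pow_ten (by linarith)).trans (by gcongr)
  have hsmall : ∀ z ∈ (minpoly ℚ α).aroots ℂ, z ≠ α → ‖aeval z auxPoly‖ ≤ 2 / 5 := by
    intro z hz hzα
    have hroot := (mem_aroots.1 hz).2
    obtain ⟨x, rfl⟩ : ∃ x : ℝ, (x : ℂ) = z := ⟨z.re, Complex.ext rfl (htotreal z hroot).symm⟩
    rw [Complex.aeval_ofReal, ← Complex.ofReal_zero, Complex.ofReal_inj] at hroot
    obtain ⟨hx₀, hx₃⟩ := hconj x hroot (by rintro rfl; exact hzα rfl)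
    rw [Complex.aeval_ofReal, Complex.norm_real, Real.norm_eq_abs]
    exact abs_aeval_auxPoly_le hx₀ hx₃
  have key := one_le_mul_pow_natDegree_minpoly_sub_one hint hpos.ne' hα hsmall
  by_contra! hdeg
  have hpow : (2 / 5 : ℝ) ^ ((minpoly ℚ α).natDegree - 1) ≤ (2 / 5) ^ 76 :=
    pow_le_pow_of_le_one (by norm_num) (by norm_num) (by omega)
  have hnum : (196 : ℝ) ^ 10 * (2 / 5) ^ 76 < 1 := by norm_num
  linarith
end
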